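/- arXiv:1302.6066 — 7 statements merged into one kernel-verified Lean document; each statement's English description precedes it below -/
import Mathlib

section
/- Define the mean volume of a pyramid (p₁,…,p₅) ∈ (ℝ³)⁵ as the average over its two triangulations: mvol(p) := (1/2)[vol(p₁,p₂,p₃,p₅) + vol(p₁,p₃,p₄,p₅) + vol(p₁,p₂,p₄,p₅) + vol(p₂,p₃,p₄,p₅)]. Then the gradient of mvol with respect to the standard inner product on (ℝ³)⁵ ≅ ℝ¹⁵ has partial gradients ∇_{p₁} mvol = (1/12)(ν(p₅,p₄,p₂) + ν(p₅,p₄,p₃,p₂)), ∇_{p₂} mvol = (1/12)(ν(p₅,p₁,p₃) + ν(p₅,p₁,p₄,p₃)), ∇_{p₃} mvol = (1/12)(ν(p₅,p₂,p₄) + ν(p₅,p₂,p₁,p₄)), ∇_{p₄} mvol = (1/12)(ν(p₅,p₃,p₁) + ν(p₅,p₃,p₂,p₁)), and ∇_{p₅} mvol = (1/6) ν(p₁,p₂,p₃,p₄). -/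
open scoped RealInnerProductSpace

noncomputable section

/-- Euclidean 3-space with the standard inner product. -/
abbrev E3 : Type := EuclideanSpace ℝ (Fin 3)

/-- The cross product on `ℝ³`. -/
def cross (a b : E3) : E3 :=
  WithLp.toLp 2 ![a 1 * b 2 - a 2 * b 1, a 2 * b 0 - a 0 * b 2, a 0 * b 1 - a 1 * b 0]

/-- `ν(a,b,c)` for a 3-cycle. -/
def nu3 (a b c : E3) : E3 := cross a b + cross b c + cross c a

/-- `ν(a,b,c,d)` for a 4-cycle. -/
def nu4 (a b c d : E3) : E3 := cross a b + cross b c + cross c d + cross d a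

/-- `ν(a,b,c,d,e)` for a 5-cycle. -/
def nu5 (a b c d e : E3) : E3 :=
  cross a b + cross b c + cross c d + cross d e + cross e a

/-- `ν(a,b,c,d,e,f)` for a 6-cycle. -/
def nu6 (a b c d e f : E3) : E3 :=
  cross a b + cross b c + cross c d + cross d e + cross e f + cross f a

/-- The signed volume of a tetrahedron. -/
def tvol (p₁ p₂ p₃ p₄ : E3) : ℝ :=
  (1 / 6) * ⟪cross (p₂ - p₁) (p₃ - p₁), p₄ - p₁⟫

/-- The point `(x, y, z)` of `ℝ³`. -/
def v3 (x y z : ℝ) : E3 := WithLp.toLp 2 ![x, y, z]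

/-- The mean volume of a pyramid: the average of the volumes over its two
triangulations. -/
def mvolPyr (p₁ p₂ p₃ p₄ p₅ : E3) : ℝ :=
  (1 / 2) * (tvol p₁ p₂ p₃ p₅ + tvol p₁ p₃ p₄ p₅ + tvol p₁ p₂ p₄ p₅ + tvol p₂ p₃ p₄ p₅)

/-! The signed volume is affine in each vertex: `6 vol(a, b, c, x) = ⟪ν(a, b, c), x - a⟫`, and
even permutations of the vertices bring any vertex to the last slot. Hence the partial gradient of
`mvol` at a vertex is `1/12` times the sum of the vectors `ν` of the faces opposite to it in the
four tetrahedra, and two triangles glued along a diagonal add up to the `ν` of the quadrilateral. -/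

section Gradient

variable {F : Type*} [NormedAddCommGroup F] [InnerProductSpace ℝ F] [CompleteSpace F]
  {f g : F → ℝ} {f' g' x : F}

theorem HasGradientAt.add (hf : HasGradientAt f f' x) (hg : HasGradientAt g g' x) :
    HasGradientAt (fun y => f y + g y) (f' + g') x := by
  rw [hasGradientAt_iff_hasFDerivAt] at *
  rw [map_add]
  exact hf.add hg

theorem HasGradientAt.const_mul (c : ℝ) (hf : HasGradientAt f f' x) :
    HasGradientAt (fun y => c * f y) (c • f') x := by
  rw [hasGradientAt_iff_hasFDerivAt] at *
  rw [map_smulₛₗ, starRingEnd_apply, star_trivial]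
  exact hf.const_mul c

theorem hasGradientAt_inner_sub (v a x : F) : HasGradientAt (fun y => ⟪v, y - a⟫) v x := by
  rw [hasGradientAt_iff_hasFDerivAt]
  exact (innerSL ℝ v).hasFDerivAt.comp x ((hasFDerivAt_id x).sub_const a)

end Gradient

theorem cross_swap (a b : E3) : cross b a = -cross a b := by
  ext i
  fin_cases i <;> simp only [cross, PiLp.neg_apply, Fin.zero_eta, Fin.mk_one, Fin.reduceFinMk,
    Matrix.cons_val] <;> ring

theorem cross_sub_sub_eq_nu3 (a b c : E3) : cross (b - a) (c - a) = nu3 a b c := by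
  ext i
  fin_cases i <;> simp only [cross, nu3, PiLp.add_apply, PiLp.sub_apply, Fin.zero_eta, Fin.mk_one,
    Fin.reduceFinMk, Matrix.cons_val] <;> ring

theorem inner_cross (a b c : E3) :
    ⟪cross a b, c⟫ = (a 1 * b 2 - a 2 * b 1) * c 0 + (a 2 * b 0 - a 0 * b 2) * c 1 +
      (a 0 * b 1 - a 1 * b 0) * c 2 := by
  simp only [cross, PiLp.inner_apply, RCLike.inner_apply, Real.ringHom_apply, Fin.sum_univ_three,
    Matrix.cons_val_zero, Matrix.cons_val_one, Matrix.cons_val]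
  ring

theorem nu3_rotate_right (a b c : E3) : nu3 a b c = nu3 c a b := by
  simp only [nu3]; abel

theorem nu3_add_nu3_eq_nu4 (a b c d : E3) : nu3 a b c + nu3 a c d = nu4 a b c d := by
  simp only [nu3, nu4, cross_swap c a]; abel

theorem nu3_add_nu3_eq_nu4' (a b c d : E3) : nu3 a b d + nu3 b c d = nu4 a b c d := by
  simp only [nu3, nu4, cross_swap d b]; abel

theorem tvol_eq_inner_nu3 (a b c x : E3) : tvol a b c x = 6⁻¹ * ⟪nu3 a b c, x - a⟫ := by
  rw [tvol, cross_sub_sub_eq_nu3, one_div]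

theorem tvol_reverse (a b c d : E3) : tvol a b c d = tvol d c b a := by
  simp only [tvol, inner_cross, PiLp.sub_apply]; ring

theorem tvol_swap_swap (a b c d : E3) : tvol a b c d = tvol b a d c := by
  simp only [tvol, inner_cross, PiLp.sub_apply]; ring

theorem tvol_cycle_last_three (a b c d : E3) : tvol a b c d = tvol a c d b := by
  simp only [tvol, inner_cross, PiLp.sub_apply]; ring

theorem hasGradientAt_tvol_fourth (a b c x : E3) :
    HasGradientAt (tvol a b c) ((6 : ℝ)⁻¹ • nu3 a b c) x := by
  rw [funext (tvol_eq_inner_nu3 a b c)]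
  exact (hasGradientAt_inner_sub (nu3 a b c) a x).const_mul 6⁻¹

theorem hasGradientAt_tvol_third (a b d x : E3) :
    HasGradientAt (fun y => tvol a b y d) ((6 : ℝ)⁻¹ • nu3 b a d) x := by
  simpa only [tvol_swap_swap a b _ d] using hasGradientAt_tvol_fourth b a d x

theorem hasGradientAt_tvol_second (a c d x : E3) :
    HasGradientAt (fun y => tvol a y c d) ((6 : ℝ)⁻¹ • nu3 a c d) x := by
  simpa only [tvol_cycle_last_three a _ c d] using hasGradientAt_tvol_fourth a c d x

theorem hasGradientAt_tvol_first (b c d x : E3) :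
    HasGradientAt (fun y => tvol y b c d) ((6 : ℝ)⁻¹ • nu3 d c b) x := by
  simpa only [tvol_reverse _ b c d] using hasGradientAt_tvol_fourth d c b x

section Pyramid

variable (p₁ p₂ p₃ p₄ p₅ : E3)

theorem hasGradientAt_mvolPyr_first :
    HasGradientAt (fun x => mvolPyr x p₂ p₃ p₄ p₅)
      ((12 : ℝ)⁻¹ • (nu3 p₅ p₄ p₂ + nu4 p₅ p₄ p₃ p₂)) p₁ := by
  unfold mvolPyr
  convert ((((hasGradientAt_tvol_first p₂ p₃ p₅ p₁).add
      (hasGradientAt_tvol_first p₃ p₄ p₅ p₁)).add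
      (hasGradientAt_tvol_first p₂ p₄ p₅ p₁)).add
      (hasGradientAt_const p₁ (tvol p₂ p₃ p₄ p₅))).const_mul (1 / 2) using 1
  rw [← nu3_add_nu3_eq_nu4]
  module

theorem hasGradientAt_mvolPyr_second :
    HasGradientAt (fun x => mvolPyr p₁ x p₃ p₄ p₅)
      ((12 : ℝ)⁻¹ • (nu3 p₅ p₁ p₃ + nu4 p₅ p₁ p₄ p₃)) p₂ := by
  unfold mvolPyr
  convert ((((hasGradientAt_tvol_second p₁ p₃ p₅ p₂).add
      (hasGradientAt_const p₂ (tvol p₁ p₃ p₄ p₅))).add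
      (hasGradientAt_tvol_second p₁ p₄ p₅ p₂)).add
      (hasGradientAt_tvol_first p₃ p₄ p₅ p₂)).const_mul (1 / 2) using 1
  rw [← nu3_add_nu3_eq_nu4, nu3_rotate_right p₁ p₃, nu3_rotate_right p₁ p₄]
  module

theorem hasGradientAt_mvolPyr_third :
    HasGradientAt (fun x => mvolPyr p₁ p₂ x p₄ p₅)
      ((12 : ℝ)⁻¹ • (nu3 p₅ p₂ p₄ + nu4 p₅ p₂ p₁ p₄)) p₃ := by
  unfold mvolPyr
  convert ((((hasGradientAt_tvol_third p₁ p₂ p₅ p₃).add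
      (hasGradientAt_tvol_second p₁ p₄ p₅ p₃)).add
      (hasGradientAt_const p₃ (tvol p₁ p₂ p₄ p₅))).add
      (hasGradientAt_tvol_second p₂ p₄ p₅ p₃)).const_mul (1 / 2) using 1
  rw [← nu3_add_nu3_eq_nu4, nu3_rotate_right p₂ p₄, nu3_rotate_right p₂ p₁, nu3_rotate_right p₁ p₄]
  module

theorem hasGradientAt_mvolPyr_fourth :
    HasGradientAt (fun x => mvolPyr p₁ p₂ p₃ x p₅)
      ((12 : ℝ)⁻¹ • (nu3 p₅ p₃ p₁ + nu4 p₅ p₃ p₂ p₁)) p₄ := by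
  unfold mvolPyr
  convert ((((hasGradientAt_const p₄ (tvol p₁ p₂ p₃ p₅)).add
      (hasGradientAt_tvol_third p₁ p₃ p₅ p₄)).add
      (hasGradientAt_tvol_third p₁ p₂ p₅ p₄)).add
      (hasGradientAt_tvol_third p₂ p₃ p₅ p₄)).const_mul (1 / 2) using 1
  rw [← nu3_add_nu3_eq_nu4, nu3_rotate_right p₃ p₁, nu3_rotate_right p₂ p₁, nu3_rotate_right p₃ p₂]
  module

theorem hasGradientAt_mvolPyr_fifth :
    HasGradientAt (fun x => mvolPyr p₁ p₂ p₃ p₄ x) ((6 : ℝ)⁻¹ • nu4 p₁ p₂ p₃ p₄) p₅ := by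
  unfold mvolPyr
  convert ((((hasGradientAt_tvol_fourth p₁ p₂ p₃ p₅).add
      (hasGradientAt_tvol_fourth p₁ p₃ p₄ p₅)).add
      (hasGradientAt_tvol_fourth p₁ p₂ p₄ p₅)).add
      (hasGradientAt_tvol_fourth p₂ p₃ p₄ p₅)).const_mul (1 / 2) using 1
  linear_combination (norm := module) (-12⁻¹ : ℝ) • nu3_add_nu3_eq_nu4 p₁ p₂ p₃ p₄ +
    (-12⁻¹ : ℝ) • nu3_add_nu3_eq_nu4' p₁ p₂ p₃ p₄

end Pyramid

theorem gradient_mvolPyr (p₁ p₂ p₃ p₄ p₅ : E3) :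
    gradient (fun x : E3 => mvolPyr x p₂ p₃ p₄ p₅) p₁ =
        (12 : ℝ)⁻¹ • (nu3 p₅ p₄ p₂ + nu4 p₅ p₄ p₃ p₂) ∧
    gradient (fun x : E3 => mvolPyr p₁ x p₃ p₄ p₅) p₂ =
        (12 : ℝ)⁻¹ • (nu3 p₅ p₁ p₃ + nu4 p₅ p₁ p₄ p₃) ∧
    gradient (fun x : E3 => mvolPyr p₁ p₂ x p₄ p₅) p₃ =
        (12 : ℝ)⁻¹ • (nu3 p₅ p₂ p₄ + nu4 p₅ p₂ p₁ p₄) ∧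
    gradient (fun x : E3 => mvolPyr p₁ p₂ p₃ x p₅) p₄ =
        (12 : ℝ)⁻¹ • (nu3 p₅ p₃ p₁ + nu4 p₅ p₃ p₂ p₁) ∧
    gradient (fun x : E3 => mvolPyr p₁ p₂ p₃ p₄ x) p₅ =
        (6 : ℝ)⁻¹ • nu4 p₁ p₂ p₃ p₄ :=
  ⟨(hasGradientAt_mvolPyr_first p₁ p₂ p₃ p₄ p₅).gradient,
    (hasGradientAt_mvolPyr_second p₁ p₂ p₃ p₄ p₅).gradient,
    (hasGradientAt_mvolPyr_third p₁ p₂ p₃ p₄ p₅).gradient,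
    (hasGradientAt_mvolPyr_fourth p₁ p₂ p₃ p₄ p₅).gradient,
    (hasGradientAt_mvolPyr_fifth p₁ p₂ p₃ p₄ p₅).gradient⟩
end
end

section
/- Let n ≥ 2 and let X : (ℝ³)ⁿ → (ℝ³)ⁿ be translation invariant, i.e. X(p₁+c,…,pₙ+c) = X(p₁,…,pₙ) for all c ∈ ℝ³. Let p ∈ (ℝ³)ⁿ satisfy τ(p) = p and ‖p‖ = 1, and suppose X is differentiable where needed so that π is differentiable at p. Then the Fréchet derivative of π at p applied to X(p) vanishes, D(π)_p(X(p)) = 0, if and only if there exists λ ∈ ℝ with τ(X(p)) = λ p. -/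
open scoped RealInnerProductSpace

noncomputable section

/-- The translation-normalizing map `τ(p₁,…,pₙ) = (p₁ − pₙ, …, p_{n−1} − pₙ, 0)`. -/
def tauMap {n : ℕ} (p : PiLp 2 fun _ : Fin n => E3) : PiLp 2 fun _ : Fin n => E3 :=
  WithLp.toLp 2 fun i : Fin n =>
    if (i : ℕ) = n - 1 then 0 else p i - p ⟨n - 1, Nat.sub_lt i.pos Nat.one_pos⟩

/-- The map `π = σ ∘ τ`, where `σ` is radial projection to the unit sphere. -/
def piMap {n : ℕ} (p : PiLp 2 fun _ : Fin n => E3) : PiLp 2 fun _ : Fin n => E3 :=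
  ‖tauMap p‖⁻¹ • tauMap p

/-! The radial projection `σ` has derivative `v ↦ v - ⟪p, v⟫ p` at a unit vector `p`, the orthogonal
projection onto `p^⊥`, whose kernel is the line `ℝ p`. Since `τ` is linear and fixes `p`, the chain
rule gives `Dπ_p = (id - ⟪p, ·⟫ p) ∘ τ`, which vanishes on `v` exactly when `τ v ∈ ℝ p`. -/

section RadialProjection

variable {F : Type*} [NormedAddCommGroup F] [InnerProductSpace ℝ F]

theorem hasFDerivAt_norm_of_ne_zero {x : F} (hx : x ≠ 0) :
    HasFDerivAt (‖·‖) (‖x‖⁻¹ • innerSL ℝ x) x := by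
  have hsq : ‖x‖ ^ 2 ≠ 0 := by positivity
  have h := (Real.hasDerivAt_sqrt hsq).comp_hasFDerivAt x (hasStrictFDerivAt_norm_sq x).hasFDerivAt
  simp only [Function.comp_def, Real.sqrt_sq (norm_nonneg _)] at h
  refine h.congr_fderiv ?_
  ext v
  simp only [one_div, mul_inv_rev, smul_apply, coe_innerSL_apply, nsmul_eq_mul,
    Nat.cast_ofNat, smul_eq_mul]
  field_simp

theorem hasFDerivAt_norm_inv_smul_of_norm_eq_one {x : F} (hx : ‖x‖ = 1) :
    HasFDerivAt (fun y : F => ‖y‖⁻¹ • y)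
      (ContinuousLinearMap.id ℝ F - (innerSL ℝ x).smulRight x) x := by
  have hx0 : x ≠ 0 := norm_ne_zero_iff.1 (by simp [hx])
  have hinv := (hasDerivAt_inv (by simp [hx])).comp_hasFDerivAt x (hasFDerivAt_norm_of_ne_zero hx0)
  refine (hinv.smul (hasFDerivAt_id x)).congr_fderiv ?_
  ext v
  simp only [Function.comp_apply, hx, inv_one, one_smul, one_pow, neg_smul, id_eq,
    add_apply, ContinuousLinearMap.id_apply, ContinuousLinearMap.smulRight_apply,
    neg_apply, coe_innerSL_apply, sub_apply]
  module

theorem sub_inner_smul_eq_zero_iff_exists_eq_smul {x v : F} (hx : ‖x‖ = 1) :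
    v - ⟪x, v⟫ • x = 0 ↔ ∃ c : ℝ, v = c • x := by
  refine ⟨fun h => ⟨⟪x, v⟫, sub_eq_zero.1 h⟩, ?_⟩
  rintro ⟨c, rfl⟩
  simp [real_inner_smul_right, hx]

end RadialProjection

-- A shortcut: synthesizing this inside the derivative computations below times out.
instance (n : ℕ) : ContinuousSMul ℝ (PiLp 2 fun _ : Fin n => E3) := inferInstance

def tauCLM (n : ℕ) : (PiLp 2 fun _ : Fin n => E3) →L[ℝ] PiLp 2 fun _ : Fin n => E3 :=
  LinearMap.toContinuousLinearMap
    { toFun := tauMap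
      map_add' := fun p q => by
        ext i : 1
        simp only [tauMap, PiLp.add_apply, PiLp.toLp_apply]
        split_ifs
        · simp
        · abel
      map_smul' := fun c p => by
        ext i : 1
        simp only [tauMap, PiLp.smul_apply, RingHom.id_apply, PiLp.toLp_apply]
        split_ifs
        · simp
        · simp [smul_sub] }

theorem hasFDerivAt_piMap {n : ℕ} {p : PiLp 2 fun _ : Fin n => E3}
    (hp : tauMap p = p) (hpnorm : ‖p‖ = 1) :
    HasFDerivAt piMap
      ((ContinuousLinearMap.id ℝ _ - (innerSL ℝ p).smulRight p).comp (tauCLM n)) p := by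
  have hσ := hasFDerivAt_norm_inv_smul_of_norm_eq_one hpnorm
  rw [← hp] at hσ
  have hπ := hσ.comp p (tauCLM n).hasFDerivAt
  rw [hp] at hπ
  exact hπ

theorem singularity_iff_radial_general (n : ℕ)
    (X : (PiLp 2 fun _ : Fin n => E3) → PiLp 2 fun _ : Fin n => E3)
    (p : PiLp 2 fun _ : Fin n => E3) (hp : tauMap p = p) (hpnorm : ‖p‖ = 1) :
    fderiv ℝ (piMap (n := n)) p (X p) = 0 ↔ ∃ lam : ℝ, tauMap (X p) = lam • p := by
  rw [(hasFDerivAt_piMap hp hpnorm).fderiv]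
  exact sub_inner_smul_eq_zero_iff_exists_eq_smul hpnorm

theorem singularity_iff_radial (n : ℕ) (hn : 2 ≤ n)
    (X : (PiLp 2 fun _ : Fin n => E3) → PiLp 2 fun _ : Fin n => E3)
    (htrans : ∀ p (v : E3), X (p + (WithLp.equiv 2 (Fin n → E3)).symm (fun _ => v)) = X p)
    (p : PiLp 2 fun _ : Fin n => E3) (hp : tauMap p = p) (hpnorm : ‖p‖ = 1)
    (hdiff : DifferentiableAt ℝ (piMap (n := n)) p) :
    fderiv ℝ (piMap (n := n)) p (X p) = 0 ↔ ∃ lam : ℝ, tauMap (X p) = lam • p :=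
  singularity_iff_radial_general n X p hp hpnorm
end
end

section
/- Let E be a finite-dimensional real inner product space, let f : E → ℝ be continuously differentiable, and define the projected gradient field Y(p) := ∇f(p) − ⟨∇f(p), p⟩ p on the unit sphere of E. Let γ : ℝ → E satisfy ‖γ(t)‖ = 1 for all t and either γ'(t) = Y(γ(t)) for all t, or γ'(t) = Ψ(∇f(γ(t))) − ⟨Ψ(∇f(γ(t))), γ(t)⟩ γ(t) for all t. Then (i) f ∘ γ is nondecreasing, and (ii) there exist a point p with ‖p‖ = 1 and Y(p) = 0 and a sequence tₙ → +∞ with γ(tₙ) → p, and likewise there exist a point q with ‖q‖ = 1 and Y(q) = 0 and a sequence sₙ → −∞ with γ(sₙ) → q. -/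
/-!
Along a flow line, `f ∘ γ` has derivative `⟪∇f(γ t), γ' t⟫`, which equals `‖Y(γ t)‖²` for the
first field and `‖Y(γ t)‖² / √‖∇f(γ t)‖` for the second; as `∇f` is bounded on the sphere, in both
cases it is nonnegative and at least a fixed positive multiple of `‖Y(γ t)‖²`. Hence `f ∘ γ` is nondecreasing, and
since `γ` stays on the compact sphere it is bounded, so it converges at `±∞`. The mean value theorem
on `[n, n + 1]` then yields times `cₙ → ±∞` with `Y(γ cₙ) → 0`, and a convergent subsequence of
`γ cₙ` ends at a zero of `Y`.
-/

open scoped RealInnerProductSpace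
open Filter

noncomputable section

open Classical in
/-- The normalization `Ψ(v) = v / √‖v‖` for `v ≠ 0`, `Ψ(0) = 0`. -/
def Psi {E : Type*} [NormedAddCommGroup E] [NormedSpace ℝ E] (v : E) : E :=
  if v = 0 then 0 else (Real.sqrt ‖v‖)⁻¹ • v

open Topology

section TangentPart

variable {E : Type*} [NormedAddCommGroup E] [InnerProductSpace ℝ E]

/-- For `‖q‖ = 1`, the projection of `v` onto the tangent space of the unit sphere at `q`;
the field of the theorem is `Y p = tangentPart p (∇f p)`. -/
def tangentPart (q v : E) : E := v - ⟪v, q⟫ • q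

theorem Continuous.tangentPart {X : Type*} [TopologicalSpace X] {q v : X → E}
    (hq : Continuous q) (hv : Continuous v) : Continuous fun x => tangentPart (q x) (v x) :=
  hv.sub ((hv.inner hq).smul hq)

theorem inner_tangentPart_self {q : E} (hq : ‖q‖ = 1) (v : E) :
    ⟪v, tangentPart q v⟫ = ‖tangentPart q v‖ ^ 2 := by
  have hqq : ⟪q, q⟫ = 1 := by rw [real_inner_self_eq_norm_sq, hq, one_pow]
  rw [← real_inner_self_eq_norm_sq, tangentPart]
  simp only [inner_sub_left, inner_sub_right, real_inner_smul_left, real_inner_smul_right,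
    real_inner_comm v q, hqq]
  ring

theorem Psi_eq_smul (v : E) : Psi v = (√‖v‖)⁻¹ • v := by
  unfold Psi
  split_ifs with h <;> simp [h]

theorem tangentPart_Psi (q v : E) : tangentPart q (Psi v) = (√‖v‖)⁻¹ • tangentPart q v := by
  rw [tangentPart, tangentPart, Psi_eq_smul, real_inner_smul_left, smul_sub, smul_smul]

theorem inner_tangentPart_Psi {q : E} (hq : ‖q‖ = 1) (v : E) :
    ⟪v, tangentPart q (Psi v)⟫ = (√‖v‖)⁻¹ * ‖tangentPart q v‖ ^ 2 := by
  rw [tangentPart_Psi, real_inner_smul_right, inner_tangentPart_self hq]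

theorem sq_norm_tangentPart_le_inner_Psi {q v : E} {M : ℝ} (hq : ‖q‖ = 1) (hv : ‖v‖ ≤ M) :
    ‖tangentPart q v‖ ^ 2 ≤ √M * ⟪v, tangentPart q (Psi v)⟫ := by
  rw [inner_tangentPart_Psi hq]
  rcases eq_or_ne v 0 with rfl | hv0
  · simp [tangentPart]
  · have hpos : 0 < √‖v‖ := Real.sqrt_pos.2 (norm_pos_iff.2 hv0)
    calc ‖tangentPart q v‖ ^ 2 = √‖v‖ * ((√‖v‖)⁻¹ * ‖tangentPart q v‖ ^ 2) := by
          field_simp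
      _ ≤ √M * ((√‖v‖)⁻¹ * ‖tangentPart q v‖ ^ 2) := by gcongr

theorem exists_hasDerivAt_sq_norm_tangentPart_le {g : E → E} {γ : ℝ → E}
    (hγ : ∀ t, ‖γ t‖ = 1) {M : ℝ} (hM : ∀ t, ‖g (γ t)‖ ≤ M)
    (hflow : (∀ t, HasDerivAt γ (tangentPart (γ t) (g (γ t))) t) ∨
      (∀ t, HasDerivAt γ (tangentPart (γ t) (Psi (g (γ t)))) t)) :
    ∃ d : ℝ → E, (∀ t, HasDerivAt γ (d t) t) ∧ (∀ t, 0 ≤ ⟪g (γ t), d t⟫) ∧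
      ∃ C : ℝ, ∀ t, ‖tangentPart (γ t) (g (γ t))‖ ^ 2 ≤ C * ⟪g (γ t), d t⟫ := by
  rcases hflow with h | h
  · refine ⟨_, h, fun t => ?_, 1, fun t => ?_⟩ <;> rw [inner_tangentPart_self (hγ t)]
    · positivity
    · rw [one_mul]
  · refine ⟨_, h, fun t => ?_, √M, fun t => sq_norm_tangentPart_le_inner_Psi (hγ t) (hM t)⟩
    rw [inner_tangentPart_Psi (hγ t)]
    positivity

end TangentPart

section Gradient

variable {E : Type*} [NormedAddCommGroup E] [InnerProductSpace ℝ E] [CompleteSpace E]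

theorem ContDiff.continuous_gradient {f : E → ℝ} {n : WithTop ℕ∞} (hf : ContDiff ℝ n f)
    (hn : n ≠ 0) : Continuous (gradient f) :=
  (InnerProductSpace.toDual ℝ E).symm.continuous.comp (hf.continuous_fderiv hn)

theorem HasGradientAt.comp_hasDerivAt {f : E → ℝ} {f' γ' : E} {γ : ℝ → E} {t : ℝ}
    (hf : HasGradientAt f f' (γ t)) (hγ : HasDerivAt γ γ' t) :
    HasDerivAt (f ∘ γ) ⟪f', γ'⟫ t :=
  hf.hasFDerivAt.comp_hasDerivAt t hγ

end Gradient

theorem exists_seq_tendsto_atTop_deriv_tendsto_zero {φ φ' : ℝ → ℝ} {L : ℝ}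
    (hφ : ∀ t, HasDerivAt φ (φ' t) t) (hL : Tendsto φ atTop (𝓝 L)) :
    ∃ c : ℕ → ℝ, Tendsto c atTop atTop ∧ Tendsto (φ' ∘ c) atTop (𝓝 0) := by
  have hslope : ∀ n : ℕ, ∃ c ∈ Set.Ioo (n : ℝ) (n + 1), φ' c = φ (n + 1) - φ n := by
    intro n
    obtain ⟨c, hc, hφ'c⟩ := exists_hasDerivAt_eq_slope φ φ' (lt_add_one (n : ℝ))
      (fun t _ => (hφ t).continuousAt.continuousWithinAt) (fun t _ => hφ t)
    exact ⟨c, hc, by rwa [add_sub_cancel_left, div_one] at hφ'c⟩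
  choose c hc hφ'c using hslope
  have hnat : Tendsto (fun n : ℕ => (n : ℝ)) atTop atTop := tendsto_natCast_atTop_atTop
  refine ⟨c, tendsto_atTop_mono (fun n => (hc n).1.le) hnat, ?_⟩
  simpa [Function.comp_def, hφ'c] using
    (hL.comp (tendsto_atTop_add_const_right _ 1 hnat)).sub (hL.comp hnat)

theorem exists_seq_tendsto_atBot_deriv_tendsto_zero {φ φ' : ℝ → ℝ} {L : ℝ}
    (hφ : ∀ t, HasDerivAt φ (φ' t) t) (hL : Tendsto φ atBot (𝓝 L)) :
    ∃ c : ℕ → ℝ, Tendsto c atTop atBot ∧ Tendsto (φ' ∘ c) atTop (𝓝 0) := by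
  obtain ⟨c, hc, hc0⟩ := exists_seq_tendsto_atTop_deriv_tendsto_zero
    (φ := fun t => φ (-t)) (φ' := fun t => -φ' (-t))
    (fun t => by simpa [Function.comp_def] using (hφ (-t)).comp t (hasDerivAt_neg t))
    (hL.comp tendsto_neg_atTop_atBot)
  exact ⟨fun n => -c n, tendsto_neg_atTop_atBot.comp hc, by simpa [Function.comp_def] using hc0.neg⟩

theorem IsCompact.exists_eq_zero_subseq_tendsto {X F : Type*} [TopologicalSpace X]
    [FirstCountableTopology X] [TopologicalSpace F] [T2Space F] [Zero F] {K : Set X}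
    (hK : IsCompact K) {Y : X → F} (hY : Continuous Y) {x : ℕ → X} (hx : ∀ n, x n ∈ K)
    (hYx : Tendsto (Y ∘ x) atTop (𝓝 0)) :
    ∃ p ∈ K, Y p = 0 ∧ ∃ σ : ℕ → ℕ, StrictMono σ ∧ Tendsto (x ∘ σ) atTop (𝓝 p) := by
  obtain ⟨p, hpK, σ, hσ, hxσ⟩ := hK.tendsto_subseq hx
  exact ⟨p, hpK, tendsto_nhds_unique ((hY.tendsto p).comp hxσ) (hYx.comp hσ.tendsto_atTop),
    σ, hσ, hxσ⟩

theorem IsCompact.exists_eq_zero_of_sq_norm_le {X F : Type*} [TopologicalSpace X]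
    [FirstCountableTopology X] [NormedAddCommGroup F] {K : Set X} (hK : IsCompact K)
    {Y : X → F} (hY : Continuous Y) {γ : ℝ → X} (hγ : ∀ t, γ t ∈ K) {v : ℝ → ℝ} {C : ℝ}
    (hYv : ∀ t, ‖Y (γ t)‖ ^ 2 ≤ C * v t) {l : Filter ℝ} {c : ℕ → ℝ} (hc : Tendsto c atTop l)
    (hvc : Tendsto (v ∘ c) atTop (𝓝 0)) :
    ∃ p ∈ K, Y p = 0 ∧ ∃ t : ℕ → ℝ, Tendsto t atTop l ∧ Tendsto (γ ∘ t) atTop (𝓝 p) := by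
  have hsq : Tendsto (fun n => ‖Y (γ (c n))‖ ^ 2) atTop (𝓝 0) := by
    have hCvc := hvc.const_mul C
    rw [mul_zero] at hCvc
    exact squeeze_zero (fun n => by positivity) (fun n => hYv (c n)) hCvc
  have hYc : Tendsto (Y ∘ γ ∘ c) atTop (𝓝 0) := by
    rw [tendsto_zero_iff_norm_tendsto_zero]
    simpa [Real.sqrt_sq (norm_nonneg _)] using hsq.sqrt
  obtain ⟨p, hpK, hYp, σ, hσ, hp⟩ := hK.exists_eq_zero_subseq_tendsto hY (fun n => hγ (c n)) hYc
  exact ⟨p, hpK, hYp, c ∘ σ, hc.comp hσ.tendsto_atTop, hp⟩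

theorem flow_lines_start_and_end_at_singularities
    (E : Type*) [NormedAddCommGroup E] [InnerProductSpace ℝ E] [FiniteDimensional ℝ E]
    (f : E → ℝ) (hf : ContDiff ℝ 1 f)
    (Y : E → E) (hY : ∀ p : E, Y p = gradient f p - ⟪gradient f p, p⟫ • p)
    (γ : ℝ → E) (hγ : ∀ t : ℝ, ‖γ t‖ = 1)
    (hflow : (∀ t : ℝ, HasDerivAt γ (Y (γ t)) t) ∨
      (∀ t : ℝ, HasDerivAt γ
        (Psi (gradient f (γ t)) - ⟪Psi (gradient f (γ t)), γ t⟫ • γ t) t)) :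
    Monotone (f ∘ γ) ∧
    (∃ p : E, ‖p‖ = 1 ∧ Y p = 0 ∧ ∃ t : ℕ → ℝ,
      Tendsto t atTop atTop ∧ Tendsto (fun n => γ (t n)) atTop (nhds p)) ∧
    (∃ q : E, ‖q‖ = 1 ∧ Y q = 0 ∧ ∃ s : ℕ → ℝ,
      Tendsto s atTop atBot ∧ Tendsto (fun n => γ (s n)) atTop (nhds q)) := by
  obtain rfl : Y = fun p => tangentPart p (gradient f p) := funext hY
  set S := Metric.sphere (0 : E) 1
  have hS : IsCompact S := isCompact_sphere 0 1
  have hγS : ∀ t, γ t ∈ S := fun t => mem_sphere_zero_iff_norm.2 (hγ t)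
  have hg := hf.continuous_gradient one_ne_zero
  obtain ⟨M, hM⟩ := hS.exists_bound_of_continuousOn hg.continuousOn
  obtain ⟨d, hd, hd_nonneg, C, hC⟩ :=
    exists_hasDerivAt_sq_norm_tangentPart_le hγ (fun t => hM _ (hγS t)) hflow
  have hφ : ∀ t, HasDerivAt (f ∘ γ) ⟪gradient f (γ t), d t⟫ t := fun t =>
    ((hf.differentiable one_ne_zero) (γ t)).hasGradientAt.comp_hasDerivAt (hd t)
  have hmono : Monotone (f ∘ γ) := monotone_of_deriv_nonneg
    (fun t => (hφ t).differentiableAt) (fun t => (hφ t).deriv ▸ hd_nonneg t)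
  have hrange : Set.range (f ∘ γ) ⊆ f '' S := Set.range_subset_iff.2 fun t => ⟨γ t, hγS t, rfl⟩
  have hYcont : Continuous fun p => tangentPart p (gradient f p) := continuous_id.tangentPart hg
  refine ⟨hmono, ?_, ?_⟩
  · obtain ⟨c, hc, hc0⟩ := exists_seq_tendsto_atTop_deriv_tendsto_zero hφ
      (tendsto_atTop_ciSup hmono ((hS.bddAbove_image hf.continuous.continuousOn).mono hrange))
    obtain ⟨p, hp, hYp, t, ht⟩ := hS.exists_eq_zero_of_sq_norm_le hYcont hγS hC hc hc0
    exact ⟨p, mem_sphere_zero_iff_norm.1 hp, hYp, t, ht⟩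
  · obtain ⟨c, hc, hc0⟩ := exists_seq_tendsto_atBot_deriv_tendsto_zero hφ
      (tendsto_atBot_ciInf hmono ((hS.bddBelow_image hf.continuous.continuousOn).mono hrange))
    obtain ⟨q, hq, hYq, s, hs⟩ := hS.exists_eq_zero_of_sq_norm_le hYcont hγS hC hc hc0
    exact ⟨q, mem_sphere_zero_iff_norm.1 hq, hYq, s, hs⟩
end
end

section
/- Let q₁,…,q₅ ∈ ℝ³ be non-collinear and X-optimal for the pyramid gradient field X, i.e. there exist λ ≠ 0 and c ∈ ℝ³ with X_i(q) = λ q_i + c for i = 1,…,5. Then the base is a planar square with the apex orthogonally above its center: q₁ + q₃ = q₂ + q₄, the four base sides have equal length ‖q₂−q₁‖ = ‖q₃−q₂‖ = ‖q₄−q₃‖ = ‖q₁−q₄‖, adjacent sides are orthogonal, (q₂−q₁)·(q₄−q₁) = 0, and q₅ − (q₁+q₂+q₃+q₄)/4 is orthogonal to both q₂−q₁ and q₄−q₁. -/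
open scoped RealInnerProductSpace

noncomputable section

/-!
Taking differences and sums of the optimality equations at opposite base vertices eliminates `c`.
The sums give `λ (q₁ + q₃) = λ (q₂ + q₄)`, so the base is a parallelogram; let `m` be its centre.
The differences are cross products: with `u = q₁ - q₃`, `v = q₄ - q₂`, `p = q₅ - m` and `μ = λ / 2`
one finds `μ u = p × v` and `μ v = -(p × u)`. Hence `u`, `v`, `p` are pairwise orthogonal, and
`μ ‖u‖² = μ ‖v‖²` is the triple product `[p, v, u]` computed in two ways. A parallelogram with
orthogonal diagonals of equal length is a square, and `p` is orthogonal to its plane.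
-/

open Matrix

/-- `X₁ = pyramidBaseField q₂ q₃ q₄ q₅`; `X₂`, `X₃`, `X₄` follow by rotating the base indices. -/
def pyramidBaseField (b c d e : E3) : E3 := (1 / 2 : ℝ) • (nu3 e d b + nu4 e d c b)

theorem inner_cross_s13 (x u w : E3) :
    ⟪x, cross u w⟫ = WithLp.ofLp x ⬝ᵥ (WithLp.ofLp u ⨯₃ WithLp.ofLp w) := by
  simp only [cross, PiLp.inner_apply, RCLike.inner_apply, Real.ringHom_apply, Fin.sum_univ_three,
    dotProduct, cross_apply, Fin.isValue, cons_val_zero, cons_val_one, cons_val]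
  ring

theorem pyramidBaseField_add_opposite (a b c d e : E3) :
    pyramidBaseField b c d e + pyramidBaseField d a b e =
      pyramidBaseField c d a e + pyramidBaseField a b c e := by
  ext i
  fin_cases i <;>
    simp only [pyramidBaseField, nu3, nu4, cross, Fin.isValue, Fin.zero_eta, Fin.mk_one,
      Fin.reduceFinMk, PiLp.add_apply, PiLp.smul_apply, cons_val_zero, cons_val_one, cons_val,
      smul_eq_mul] <;>
    ring

theorem pyramidBaseField_sub_opposite (a b c d e : E3) :
    pyramidBaseField b c d e - pyramidBaseField d a b e =
      (2 : ℝ) • cross (e - (4 : ℝ)⁻¹ • (a + b + c + d)) (d - b) := by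
  ext i
  fin_cases i <;>
    simp only [pyramidBaseField, nu3, nu4, cross, Fin.isValue, Fin.zero_eta, Fin.mk_one,
      Fin.reduceFinMk, PiLp.add_apply, PiLp.sub_apply, PiLp.smul_apply, cons_val_zero,
      cons_val_one, cons_val, smul_eq_mul] <;>
    ring

section Optimal

variable {lam : ℝ} {a b c d e k : E3}

theorem add_opposite_eq_of_pyramidBaseField_eq (hlam : lam ≠ 0)
    (ha : pyramidBaseField b c d e = lam • a + k) (hb : pyramidBaseField c d a e = lam • b + k)
    (hc : pyramidBaseField d a b e = lam • c + k) (hd : pyramidBaseField a b c e = lam • d + k) :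
    a + c = b + d := by
  have h := pyramidBaseField_add_opposite a b c d e
  rw [ha, hb, hc, hd] at h
  exact smul_right_injective E3 hlam (by linear_combination (norm := module) h)

theorem half_smul_sub_eq_cross_of_pyramidBaseField_eq
    (ha : pyramidBaseField b c d e = lam • a + k) (hc : pyramidBaseField d a b e = lam • c + k) :
    (lam / 2) • (a - c) = cross (e - (4 : ℝ)⁻¹ • (a + b + c + d)) (d - b) := by
  have h := pyramidBaseField_sub_opposite a b c d e
  rw [ha, hc] at h
  linear_combination (norm := module) (2⁻¹ : ℝ) • h

end Optimal

theorem inner_eq_zero_and_norm_eq_of_smul_eq_cross {μ : ℝ} (hμ : μ ≠ 0) {u v w : E3}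
    (hu : μ • u = cross w v) (hv : μ • v = -cross w u) :
    ⟪u, v⟫ = 0 ∧ ⟪w, u⟫ = 0 ∧ ⟪w, v⟫ = 0 ∧ ‖u‖ = ‖v‖ := by
  have hu' (x : E3) : μ * ⟪x, u⟫ = WithLp.ofLp x ⬝ᵥ (WithLp.ofLp w ⨯₃ WithLp.ofLp v) := by
    rw [← inner_smul_right, hu, inner_cross_s13]
  have hv' (x : E3) : μ * ⟪x, v⟫ = -(WithLp.ofLp x ⬝ᵥ (WithLp.ofLp w ⨯₃ WithLp.ofLp u)) := by
    rw [← inner_smul_right, hv, inner_neg_right, inner_cross_s13]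
  have hvu := hu' v
  have hwu := hu' w
  have hwv := hv' w
  have huu := hu' u
  rw [dot_cross_self] at hvu
  rw [dot_self_cross] at hwu hwv
  rw [triple_product_permutation, ← cross_anticomm, dotProduct_neg,
    ← triple_product_permutation, ← hv' v] at huu
  refine ⟨?_, ?_, ?_, ?_⟩
  · simpa [real_inner_comm, hμ] using hvu
  · simpa [hμ] using hwu
  · simpa [hμ] using hwv
  · have hsq : ‖u‖ ^ 2 = ‖v‖ ^ 2 := by
      rw [← real_inner_self_eq_norm_sq, ← real_inner_self_eq_norm_sq]
      exact mul_left_cancel₀ hμ huu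
    exact (sq_eq_sq₀ (norm_nonneg _) (norm_nonneg _)).mp hsq

section Parallelogram

variable {V : Type*} [NormedAddCommGroup V] [InnerProductSpace ℝ V] {a b c d : V}

theorem sub_eq_smul_diagonals_of_add_eq (hpar : a + c = b + d) :
    b - a = -(2⁻¹ : ℝ) • ((d - b) + (a - c)) ∧ c - b = (2⁻¹ : ℝ) • ((d - b) - (a - c)) ∧
      d - c = (2⁻¹ : ℝ) • ((d - b) + (a - c)) ∧ a - d = -(2⁻¹ : ℝ) • ((d - b) - (a - c)) ∧
      d - a = (2⁻¹ : ℝ) • ((d - b) - (a - c)) := by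
  obtain rfl : d = a + c - b := by rw [hpar]; abel
  refine ⟨?_, ?_, ?_, ?_, ?_⟩ <;> module

theorem square_of_diagonals (hpar : a + c = b + d) (hperp : ⟪a - c, d - b⟫ = 0)
    (hlen : ‖a - c‖ = ‖d - b‖) :
    ‖b - a‖ = ‖c - b‖ ∧ ‖c - b‖ = ‖d - c‖ ∧ ‖d - c‖ = ‖a - d‖ ∧ ⟪b - a, d - a⟫ = 0 := by
  obtain ⟨hba, hcb, hdc, had, hda⟩ := sub_eq_smul_diagonals_of_add_eq hpar
  have hsum : ‖(d - b) - (a - c)‖ = ‖(d - b) + (a - c)‖ := norm_sub_eq_norm_add hperp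
  refine ⟨?_, ?_, ?_, ?_⟩
  · rw [hba, hcb, norm_smul, norm_smul, norm_neg, hsum]
  · rw [hcb, hdc, norm_smul, norm_smul, hsum]
  · rw [hdc, had, norm_smul, norm_smul, norm_neg, hsum]
  · rw [hba, hda, real_inner_smul_left, real_inner_smul_right,
      (real_inner_add_sub_eq_zero_iff _ _).mpr hlen.symm, mul_zero, mul_zero]

theorem inner_sides_eq_zero_of_inner_diagonals_eq_zero (p : V) (hpar : a + c = b + d)
    (hac : ⟪p, a - c⟫ = 0) (hdb : ⟪p, d - b⟫ = 0) : ⟪p, b - a⟫ = 0 ∧ ⟪p, d - a⟫ = 0 := by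
  obtain ⟨hba, -, -, -, hda⟩ := sub_eq_smul_diagonals_of_add_eq hpar
  rw [hba, hda, real_inner_smul_right, real_inner_smul_right, inner_add_right p (d - b),
    inner_sub_right p (d - b), hac, hdb]
  norm_num

end Parallelogram

theorem optimal_pyramid_square_base_general (q₁ q₂ q₃ q₄ q₅ : E3)
    (lam : ℝ) (hlam : lam ≠ 0) (c : E3)
    (h₁ : (1 / 2 : ℝ) • (nu3 q₅ q₄ q₂ + nu4 q₅ q₄ q₃ q₂) = lam • q₁ + c)
    (h₂ : (1 / 2 : ℝ) • (nu3 q₅ q₁ q₃ + nu4 q₅ q₁ q₄ q₃) = lam • q₂ + c)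
    (h₃ : (1 / 2 : ℝ) • (nu3 q₅ q₂ q₄ + nu4 q₅ q₂ q₁ q₄) = lam • q₃ + c)
    (h₄ : (1 / 2 : ℝ) • (nu3 q₅ q₃ q₁ + nu4 q₅ q₃ q₂ q₁) = lam • q₄ + c) :
    q₁ + q₃ = q₂ + q₄ ∧
    ‖q₂ - q₁‖ = ‖q₃ - q₂‖ ∧ ‖q₃ - q₂‖ = ‖q₄ - q₃‖ ∧ ‖q₄ - q₃‖ = ‖q₁ - q₄‖ ∧
    ⟪q₂ - q₁, q₄ - q₁⟫ = 0 ∧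
    ⟪q₅ - (4 : ℝ)⁻¹ • (q₁ + q₂ + q₃ + q₄), q₂ - q₁⟫ = 0 ∧
    ⟪q₅ - (4 : ℝ)⁻¹ • (q₁ + q₂ + q₃ + q₄), q₄ - q₁⟫ = 0 := by
  have hpar : q₁ + q₃ = q₂ + q₄ := add_opposite_eq_of_pyramidBaseField_eq hlam h₁ h₂ h₃ h₄
  have hu := half_smul_sub_eq_cross_of_pyramidBaseField_eq h₁ h₃
  have hv := half_smul_sub_eq_cross_of_pyramidBaseField_eq h₂ h₄
  rw [show q₂ + q₃ + q₄ + q₁ = q₁ + q₂ + q₃ + q₄ by abel, ← neg_sub q₄ q₂, smul_neg,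
    neg_eq_iff_eq_neg] at hv
  obtain ⟨hperp, hpu, hpv, hlen⟩ :=
    inner_eq_zero_and_norm_eq_of_smul_eq_cross (div_ne_zero hlam two_ne_zero) hu hv
  obtain ⟨hside₁, hside₂, hside₃, hright⟩ := square_of_diagonals hpar hperp hlen
  obtain ⟨hapex₁, hapex₂⟩ := inner_sides_eq_zero_of_inner_diagonals_eq_zero _ hpar hpu hpv
  exact ⟨hpar, hside₁, hside₂, hside₃, hright, hapex₁, hapex₂⟩

theorem optimal_pyramid_square_base (q₁ q₂ q₃ q₄ q₅ : E3)
    (hnc : ¬ Collinear ℝ ({q₁, q₂, q₃, q₄, q₅} : Set E3))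
    (lam : ℝ) (hlam : lam ≠ 0) (c : E3)
    (h₁ : (1 / 2 : ℝ) • (nu3 q₅ q₄ q₂ + nu4 q₅ q₄ q₃ q₂) = lam • q₁ + c)
    (h₂ : (1 / 2 : ℝ) • (nu3 q₅ q₁ q₃ + nu4 q₅ q₁ q₄ q₃) = lam • q₂ + c)
    (h₃ : (1 / 2 : ℝ) • (nu3 q₅ q₂ q₄ + nu4 q₅ q₂ q₁ q₄) = lam • q₃ + c)
    (h₄ : (1 / 2 : ℝ) • (nu3 q₅ q₃ q₁ + nu4 q₅ q₃ q₂ q₁) = lam • q₄ + c)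
    (h₅ : nu4 q₁ q₂ q₃ q₄ = lam • q₅ + c) :
    q₁ + q₃ = q₂ + q₄ ∧
    ‖q₂ - q₁‖ = ‖q₃ - q₂‖ ∧ ‖q₃ - q₂‖ = ‖q₄ - q₃‖ ∧ ‖q₄ - q₃‖ = ‖q₁ - q₄‖ ∧
    ⟪q₂ - q₁, q₄ - q₁⟫ = 0 ∧
    ⟪q₅ - (4 : ℝ)⁻¹ • (q₁ + q₂ + q₃ + q₄), q₂ - q₁⟫ = 0 ∧
    ⟪q₅ - (4 : ℝ)⁻¹ • (q₁ + q₂ + q₃ + q₄), q₄ - q₁⟫ = 0 :=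
  optimal_pyramid_square_base_general q₁ q₂ q₃ q₄ q₅ lam hlam c h₁ h₂ h₃ h₄
end
end

section
/- Let q₁,…,q₅ ∈ ℝ³ be non-collinear and X-optimal for the pyramid gradient field X, i.e. there exist λ ≠ 0 and c ∈ ℝ³ with X_i(q) = λ q_i + c for i = 1,…,5. Then (q₁,…,q₅) is similar to the model pyramid: there exist r > 0, an orthogonal linear map R of ℝ³, and b ∈ ℝ³ such that q₁ = r·R(0,0,0) + b, q₂ = r·R(2,0,0) + b, q₃ = r·R(2,2,0) + b, q₄ = r·R(0,2,0) + b, and q₅ = r·R(1,1,√5) + b. -/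
/-!
Since `X₁ - X₂ + X₃ - X₄` vanishes identically and `λ ≠ 0`, the base `q₁q₂q₃q₄` is a
parallelogram. With `a = q₂ - q₁`, `b = q₄ - q₁` and `h` the vector from the centre of the base
to the apex, the five equations reduce to
`2 h × (b - a) = -λ (a + b)`, `2 h × (a + b) = λ (b - a)` and `5 a × b = 2 λ h`.
The last one makes `h` normal to the base. Pairing the first with `b - a` gives `‖a‖ = ‖b‖`;
comparing norms in the first two gives `‖a + b‖ = ‖a - b‖`, i.e. `a ⊥ b`, and then
`2 ‖h‖ = |λ|`; taking norms in the third gives `λ² = 5 ‖a‖²`. Hence `a`, `b`, `2h/√5` are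
pairwise orthogonal of common length, and the pyramid is the model one scaled by `‖a‖ / 2`.
-/

open scoped RealInnerProductSpace

noncomputable section

theorem inner_eq_coords (x y : E3) : ⟪x, y⟫ = x 0 * y 0 + x 1 * y 1 + x 2 * y 2 := by
  simp only [PiLp.inner_apply, RCLike.inner_apply, Real.ringHom_apply, Fin.sum_univ_three]
  ring

theorem inner_cross_self_left (x y : E3) : ⟪cross x y, x⟫ = 0 := by
  simp only [cross, inner_eq_coords, Matrix.cons_val_zero, Matrix.cons_val_one, Matrix.cons_val]
  ring

theorem inner_cross_self_right (x y : E3) : ⟪cross x y, y⟫ = 0 := by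
  simp only [cross, inner_eq_coords, Matrix.cons_val_zero, Matrix.cons_val_one, Matrix.cons_val]
  ring

theorem cross_zero_left (y : E3) : cross 0 y = 0 := by
  ext i; fin_cases i <;> simp [cross]

theorem norm_cross_sq (x y : E3) : ‖cross x y‖ ^ 2 = ‖x‖ ^ 2 * ‖y‖ ^ 2 - ⟪x, y⟫ ^ 2 := by
  simp only [← real_inner_self_eq_norm_sq, inner_eq_coords, cross, Matrix.cons_val_zero,
    Matrix.cons_val_one, Matrix.cons_val]
  ring

theorem norm_cross_of_inner_eq_zero {x y : E3} (hxy : ⟪x, y⟫ = 0) :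
    ‖cross x y‖ = ‖x‖ * ‖y‖ := by
  rw [← sq_eq_sq₀ (norm_nonneg _) (by positivity), norm_cross_sq, hxy, mul_pow]; ring

theorem exists_linearIsometryEquiv_smul_v3 {u₁ u₂ u₃ : E3} {s : ℝ} (hs : 0 < s)
    (h₁ : ‖u₁‖ = s) (h₂ : ‖u₂‖ = s) (h₃ : ‖u₃‖ = s)
    (h₁₂ : ⟪u₁, u₂⟫ = 0) (h₁₃ : ⟪u₁, u₃⟫ = 0) (h₂₃ : ⟪u₂, u₃⟫ = 0) :
    ∃ R : E3 ≃ₗᵢ[ℝ] E3, ∀ x y z : ℝ, s • R (v3 x y z) = x • u₁ + y • u₂ + z • u₃ := by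
  set e : Fin 3 → E3 := ![s⁻¹ • u₁, s⁻¹ • u₂, s⁻¹ • u₃]
  have he : Orthonormal ℝ e := by
    rw [orthonormal_iff_ite]
    intro i j
    fin_cases i <;> fin_cases j <;>
      simp [e, norm_smul, real_inner_smul_right, real_inner_comm,
        abs_of_pos hs, h₁, h₂, h₃, h₁₂, h₁₃, h₂₃, hs.ne']
  let B := (basisOfOrthonormalOfCardEqFinrank he (by simp)).toOrthonormalBasis
    (by simpa using he)
  refine ⟨B.repr.symm, fun x y z => ?_⟩
  rw [← B.sum_repr_symm]
  simp only [B, e, coe_basisOfOrthonormalOfCardEqFinrank, Module.Basis.coe_toOrthonormalBasis,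
    v3, Fin.sum_univ_three, Matrix.cons_val_zero, Matrix.cons_val_one, Matrix.cons_val_two,
    Matrix.head_cons, Matrix.tail_cons]
  match_scalars <;> field_simp

structure IsPyramidSolution (lam : ℝ) (a b h : E3) : Prop where
  opposite₁₃ : (2 : ℝ) • cross h (b - a) = -(lam • (a + b))
  opposite₂₄ : (2 : ℝ) • cross h (a + b) = lam • (b - a)
  apex : (5 : ℝ) • cross a b = (2 * lam) • h

namespace IsPyramidSolution

variable {lam : ℝ} {a b h : E3}

theorem inner_height_left_eq_zero (hs : IsPyramidSolution lam a b h) (hlam : lam ≠ 0) :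
    ⟪h, a⟫ = 0 := by
  have := congrArg (⟪·, a⟫) hs.apex
  simp only [real_inner_smul_left, inner_cross_self_left, mul_zero] at this
  simpa [hlam] using this.symm

theorem inner_height_right_eq_zero (hs : IsPyramidSolution lam a b h) (hlam : lam ≠ 0) :
    ⟪h, b⟫ = 0 := by
  have := congrArg (⟪·, b⟫) hs.apex
  simp only [real_inner_smul_left, inner_cross_self_right, mul_zero] at this
  simpa [hlam] using this.symm

theorem norm_right_eq_norm_left (hs : IsPyramidSolution lam a b h) (hlam : lam ≠ 0) :
    ‖b‖ = ‖a‖ := by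
  have := congrArg (⟪·, b - a⟫) hs.opposite₁₃
  simp only [real_inner_smul_left, inner_cross_self_right, inner_neg_left, mul_zero] at this
  rw [← real_inner_add_sub_eq_zero_iff, add_comm]
  simpa [hlam] using this.symm

theorem norm_opposite₁₃ (hs : IsPyramidSolution lam a b h) (hlam : lam ≠ 0) :
    2 * ‖h‖ * ‖b - a‖ = |lam| * ‖a + b‖ := by
  have hh : ⟪h, b - a⟫ = 0 := by
    rw [inner_sub_right, hs.inner_height_left_eq_zero hlam, hs.inner_height_right_eq_zero hlam,
      sub_zero]
  have := congrArg norm hs.opposite₁₃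
  rwa [norm_neg, norm_smul, norm_smul, norm_cross_of_inner_eq_zero hh, Real.norm_two,
    Real.norm_eq_abs, ← mul_assoc] at this

theorem norm_opposite₂₄ (hs : IsPyramidSolution lam a b h) (hlam : lam ≠ 0) :
    2 * ‖h‖ * ‖a + b‖ = |lam| * ‖b - a‖ := by
  have hh : ⟪h, a + b⟫ = 0 := by
    rw [inner_add_right, hs.inner_height_left_eq_zero hlam, hs.inner_height_right_eq_zero hlam,
      add_zero]
  have := congrArg norm hs.opposite₂₄
  rwa [norm_smul, norm_smul, norm_cross_of_inner_eq_zero hh, Real.norm_two,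
    Real.norm_eq_abs, ← mul_assoc] at this

theorem inner_left_right_eq_zero (hs : IsPyramidSolution lam a b h) (hlam : lam ≠ 0) :
    ⟪a, b⟫ = 0 := by
  have hdiag : ‖a + b‖ = ‖b - a‖ := by
    have hpos : 0 < 2 * ‖h‖ + |lam| := by positivity
    refine mul_right_cancel₀ hpos.ne' ?_
    linear_combination hs.norm_opposite₂₄ hlam - hs.norm_opposite₁₃ hlam
  have := congrArg (· ^ 2) hdiag
  simp only [norm_add_sq_real, norm_sub_sq_real, real_inner_comm a b] at this
  linarith

theorem eq_zero_of_left_eq_zero (hs : IsPyramidSolution lam a b h) (hlam : lam ≠ 0)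
    (ha : a = 0) : b = 0 ∧ h = 0 := by
  refine ⟨norm_eq_zero.mp (by rw [hs.norm_right_eq_norm_left hlam, ha, norm_zero]), ?_⟩
  have := hs.apex
  rw [ha, cross_zero_left, smul_zero, eq_comm, smul_eq_zero] at this
  exact this.resolve_left (mul_ne_zero two_ne_zero hlam)

theorem two_mul_norm_height_eq_abs (hs : IsPyramidSolution lam a b h) (hlam : lam ≠ 0)
    (ha : a ≠ 0) : 2 * ‖h‖ = |lam| := by
  have hdiag : ‖b - a‖ = ‖a + b‖ := by
    rw [norm_sub_eq_norm_add (hs.inner_left_right_eq_zero hlam), add_comm]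
  have hpos : 0 < ‖a + b‖ := by
    have := norm_add_sq_eq_norm_sq_add_norm_sq_real (hs.inner_left_right_eq_zero hlam)
    have := norm_pos_iff.mpr ha
    nlinarith [norm_nonneg (a + b)]
  refine mul_right_cancel₀ hpos.ne' ?_
  rw [hs.norm_opposite₂₄ hlam, hdiag]

theorem sq_lam_eq (hs : IsPyramidSolution lam a b h) (hlam : lam ≠ 0) (ha : a ≠ 0) :
    lam ^ 2 = 5 * ‖a‖ ^ 2 := by
  have := congrArg norm hs.apex
  rw [norm_smul, norm_smul, norm_cross_of_inner_eq_zero (hs.inner_left_right_eq_zero hlam),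
    hs.norm_right_eq_norm_left hlam, norm_mul, Real.norm_two, Real.norm_eq_abs, Real.norm_eq_abs,
    abs_of_pos (by norm_num)] at this
  rw [← sq_abs]
  linear_combination -this - |lam| * hs.two_mul_norm_height_eq_abs hlam ha

theorem two_mul_norm_height (hs : IsPyramidSolution lam a b h) (hlam : lam ≠ 0) (ha : a ≠ 0) :
    2 * ‖h‖ = √5 * ‖a‖ := by
  rw [hs.two_mul_norm_height_eq_abs hlam ha, ← Real.sqrt_sq_eq_abs, hs.sq_lam_eq hlam ha,
    Real.sqrt_mul (by norm_num), Real.sqrt_sq (norm_nonneg _)]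

theorem exists_linearIsometryEquiv (hs : IsPyramidSolution lam a b h) (hlam : lam ≠ 0)
    (ha : a ≠ 0) :
    ∃ R : E3 ≃ₗᵢ[ℝ] E3, ∀ x y z : ℝ,
      (‖a‖ / 2) • R (v3 x y z) = (x / 2) • a + (y / 2) • b + (z / √5) • h := by
  obtain ⟨R, hR⟩ := exists_linearIsometryEquiv_smul_v3 (u₁ := (1 / 2 : ℝ) • a)
    (u₂ := (1 / 2 : ℝ) • b) (u₃ := (√5)⁻¹ • h) (s := ‖a‖ / 2) (by positivity)
    (by rw [norm_smul]; norm_num; ring)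
    (by rw [norm_smul, hs.norm_right_eq_norm_left hlam]; norm_num; ring)
    (by rw [norm_smul, norm_inv, Real.norm_of_nonneg (by positivity)]
        field_simp; linarith [hs.two_mul_norm_height hlam ha])
    (by rw [real_inner_smul_left, real_inner_smul_right, hs.inner_left_right_eq_zero hlam,
      mul_zero, mul_zero])
    (by rw [real_inner_smul_left, real_inner_smul_right, real_inner_comm,
      hs.inner_height_left_eq_zero hlam, mul_zero, mul_zero])
    (by rw [real_inner_smul_left, real_inner_smul_right, real_inner_comm,
      hs.inner_height_right_eq_zero hlam, mul_zero, mul_zero])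
  refine ⟨R, fun x y z => ?_⟩
  rw [hR]
  module

end IsPyramidSolution

structure IsPyramidOptimal (q₁ q₂ q₃ q₄ q₅ : E3) (lam : ℝ) (c : E3) : Prop where
  eq₁ : (1 / 2 : ℝ) • (nu3 q₅ q₄ q₂ + nu4 q₅ q₄ q₃ q₂) = lam • q₁ + c
  eq₂ : (1 / 2 : ℝ) • (nu3 q₅ q₁ q₃ + nu4 q₅ q₁ q₄ q₃) = lam • q₂ + c
  eq₃ : (1 / 2 : ℝ) • (nu3 q₅ q₂ q₄ + nu4 q₅ q₂ q₁ q₄) = lam • q₃ + c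
  eq₄ : (1 / 2 : ℝ) • (nu3 q₅ q₃ q₁ + nu4 q₅ q₃ q₂ q₁) = lam • q₄ + c
  eq₅ : nu4 q₁ q₂ q₃ q₄ = lam • q₅ + c

namespace IsPyramidOptimal

variable {q₁ q₂ q₃ q₄ q₅ : E3} {lam : ℝ} {c : E3}

theorem parallelogram (hq : IsPyramidOptimal q₁ q₂ q₃ q₄ q₅ lam c) (hlam : lam ≠ 0) :
    q₃ = q₂ + q₄ - q₁ := by
  ext i
  have e₁ := congrArg (· i) hq.eq₁
  have e₂ := congrArg (· i) hq.eq₂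
  have e₃ := congrArg (· i) hq.eq₃
  have e₄ := congrArg (· i) hq.eq₄
  fin_cases i <;> simp [nu3, nu4, cross] at e₁ e₂ e₃ e₄ ⊢ <;>
    exact mul_left_cancel₀ hlam (by linear_combination e₂ - e₁ + e₄ - e₃)

theorem isPyramidSolution (hq : IsPyramidOptimal q₁ q₂ q₃ q₄ q₅ lam c) (hlam : lam ≠ 0) :
    IsPyramidSolution lam (q₂ - q₁) (q₄ - q₁) (q₅ - midpoint ℝ q₁ q₃) := by
  have hq₃ := hq.parallelogram hlam
  obtain ⟨eq₁, eq₂, eq₃, eq₄, eq₅⟩ := hq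
  subst hq₃
  refine ⟨?_, ?_, ?_⟩ <;> ext i <;>
    have e₁ := congrArg (· i) eq₁ <;> have e₂ := congrArg (· i) eq₂ <;>
    have e₃ := congrArg (· i) eq₃ <;> have e₄ := congrArg (· i) eq₄ <;>
    have e₅ := congrArg (· i) eq₅ <;>
    fin_cases i <;> simp [nu3, nu4, cross, midpoint_eq_smul_add] at e₁ e₂ e₃ e₄ e₅ ⊢
  iterate 3 linear_combination e₁ - e₃
  iterate 3 linear_combination e₄ - e₂
  iterate 3 linear_combination 2 * e₅ - (e₁ + e₂ + e₃ + e₄) / 2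

theorem sub_ne_zero_of_not_collinear (hq : IsPyramidOptimal q₁ q₂ q₃ q₄ q₅ lam c)
    (hlam : lam ≠ 0) (hnc : ¬ Collinear ℝ ({q₁, q₂, q₃, q₄, q₅} : Set E3)) : q₂ - q₁ ≠ 0 := by
  intro ha
  obtain ⟨hb, hh⟩ := (hq.isPyramidSolution hlam).eq_zero_of_left_eq_zero hlam ha
  rw [sub_eq_zero] at ha hb hh
  have hq₃ : q₃ = q₁ := by rw [hq.parallelogram hlam, ha, hb, add_sub_cancel_right]
  rw [hq₃, midpoint_self] at hh
  apply hnc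
  simp [ha, hb, hq₃, hh, collinear_singleton]

end IsPyramidOptimal

theorem optimal_pyramid_similar_to_model (q₁ q₂ q₃ q₄ q₅ : E3)
    (hnc : ¬ Collinear ℝ ({q₁, q₂, q₃, q₄, q₅} : Set E3))
    (lam : ℝ) (hlam : lam ≠ 0) (c : E3)
    (h₁ : (1 / 2 : ℝ) • (nu3 q₅ q₄ q₂ + nu4 q₅ q₄ q₃ q₂) = lam • q₁ + c)
    (h₂ : (1 / 2 : ℝ) • (nu3 q₅ q₁ q₃ + nu4 q₅ q₁ q₄ q₃) = lam • q₂ + c)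
    (h₃ : (1 / 2 : ℝ) • (nu3 q₅ q₂ q₄ + nu4 q₅ q₂ q₁ q₄) = lam • q₃ + c)
    (h₄ : (1 / 2 : ℝ) • (nu3 q₅ q₃ q₁ + nu4 q₅ q₃ q₂ q₁) = lam • q₄ + c)
    (h₅ : nu4 q₁ q₂ q₃ q₄ = lam • q₅ + c) :
    ∃ (r : ℝ) (_ : 0 < r) (R : E3 ≃ₗᵢ[ℝ] E3) (b : E3),
      q₁ = r • R (v3 0 0 0) + b ∧
      q₂ = r • R (v3 2 0 0) + b ∧
      q₃ = r • R (v3 2 2 0) + b ∧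
      q₄ = r • R (v3 0 2 0) + b ∧
      q₅ = r • R (v3 1 1 (Real.sqrt 5)) + b := by
  have hq : IsPyramidOptimal q₁ q₂ q₃ q₄ q₅ lam c := ⟨h₁, h₂, h₃, h₄, h₅⟩
  have ha := hq.sub_ne_zero_of_not_collinear hlam hnc
  obtain ⟨R, hR⟩ := (hq.isPyramidSolution hlam).exists_linearIsometryEquiv hlam ha
  refine ⟨‖q₂ - q₁‖ / 2, by positivity, R, q₁, ?_, ?_, ?_, ?_, ?_⟩ <;>
    rw [hR, hq.parallelogram hlam, midpoint_eq_smul_add, invOf_eq_inv]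
  iterate 4 module
  rw [div_self (by positivity)]
  module
end
end

section
/- Let a, h > 0 and let q be the symmetric prism q₁ = (0,0,0), q₂ = (a,0,0), q₃ = (a/2, a√3/2, 0), q₄ = (0,0,h), q₅ = (a,0,h), q₆ = (a/2, a√3/2, h). Suppose q is X-optimal for the prism gradient field X, i.e. there exist λ ≠ 0 and c ∈ ℝ³ with X_i(q) = λ q_i + c for i = 1,…,6. Then h/a = √(2/3). -/
open scoped RealInnerProductSpace

noncomputable section

/-!
Subtracting the optimality equations at two vertices eliminates `c`:
`X_i(q) - X_j(q) = λ (q_i - q_j)`. For the right prism over the triangle `(0,0,0), (a,0,0), (p,b,0)`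
of height `h`, the base edge `q₁q₂` gives `λ a = 3 b h` and the vertical edge `q₁q₄` gives
`λ h = 2 a b`; eliminating `λ` yields `3 h² = 2 a²` whenever `b ≠ 0`, whatever the triangle.
-/

@[simp]
theorem cross_v3 (x y z x' y' z' : ℝ) :
    cross (v3 x y z) (v3 x' y' z') =
      v3 (y * z' - z * y') (z * x' - x * z') (x * y' - y * x') :=
  rfl

@[simp]
theorem v3_add (x y z x' y' z' : ℝ) :
    v3 x y z + v3 x' y' z' = v3 (x + x') (y + y') (z + z') := by
  ext i; fin_cases i <;> rfl

@[simp]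
theorem v3_sub (x y z x' y' z' : ℝ) :
    v3 x y z - v3 x' y' z' = v3 (x - x') (y - y') (z - z') := by
  ext i; fin_cases i <;> rfl

@[simp]
theorem smul_v3 (r x y z : ℝ) : r • v3 x y z = v3 (r * x) (r * y) (r * z) := by
  ext i; fin_cases i <;> rfl

theorem v3_inj {x y z x' y' z' : ℝ} :
    v3 x y z = v3 x' y' z' ↔ x = x' ∧ y = y' ∧ z = z' := by
  refine ⟨fun h => ⟨congrArg (· 0) h, congrArg (· 1) h, congrArg (· 2) h⟩, ?_⟩
  rintro ⟨rfl, rfl, rfl⟩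
  rfl

theorem sub_eq_smul_sub_of_eq_smul_add {V : Type*} [AddCommGroup V] [Module ℝ V]
    {X Y p q c : V} {lam : ℝ} (hX : X = lam • p + c) (hY : Y = lam • q + c) :
    X - Y = lam • (p - q) := by
  rw [hX, hY, smul_sub]
  abel

section RightPrism

variable (a p b h : ℝ)

theorem rightPrism_field₂_sub_field₁ :
    (1 / 2 : ℝ) • (nu3 (v3 0 0 0) (v3 p b 0) (v3 a 0 h) +
        nu5 (v3 p b 0) (v3 p b h) (v3 a 0 h) (v3 0 0 h) (v3 0 0 0)) -
      (1 / 2 : ℝ) • (nu3 (v3 p b 0) (v3 a 0 0) (v3 0 0 h) +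
        nu5 (v3 a 0 0) (v3 a 0 h) (v3 0 0 h) (v3 p b h) (v3 p b 0)) =
      v3 (3 * b * h) (3 / 2 * h * (a - 2 * p)) 0 := by
  simp only [nu3, nu5, cross_v3, v3_add, v3_sub, smul_v3]
  ring_nf

theorem rightPrism_field₄_sub_field₁ :
    (1 / 2 : ℝ) • (nu3 (v3 a 0 h) (v3 p b h) (v3 0 0 0) +
        nu5 (v3 p b h) (v3 p b 0) (v3 0 0 0) (v3 a 0 0) (v3 a 0 h)) -
      (1 / 2 : ℝ) • (nu3 (v3 p b 0) (v3 a 0 0) (v3 0 0 h) +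
        nu5 (v3 a 0 0) (v3 a 0 h) (v3 0 0 h) (v3 p b h) (v3 p b 0)) =
      v3 0 0 (2 * a * b) := by
  simp only [nu3, nu5, cross_v3, v3_add, v3_sub, smul_v3]
  ring_nf

end RightPrism

theorem rightPrism_height_sq_of_optimal {a b p h lam : ℝ} {c : E3} (ha : a ≠ 0) (hb : b ≠ 0)
    (h₁ : (1 / 2 : ℝ) • (nu3 (v3 p b 0) (v3 a 0 0) (v3 0 0 h) +
        nu5 (v3 a 0 0) (v3 a 0 h) (v3 0 0 h) (v3 p b h) (v3 p b 0)) = lam • v3 0 0 0 + c)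
    (h₂ : (1 / 2 : ℝ) • (nu3 (v3 0 0 0) (v3 p b 0) (v3 a 0 h) +
        nu5 (v3 p b 0) (v3 p b h) (v3 a 0 h) (v3 0 0 h) (v3 0 0 0)) = lam • v3 a 0 0 + c)
    (h₄ : (1 / 2 : ℝ) • (nu3 (v3 a 0 h) (v3 p b h) (v3 0 0 0) +
        nu5 (v3 p b h) (v3 p b 0) (v3 0 0 0) (v3 a 0 0) (v3 a 0 h)) = lam • v3 0 0 h + c) :
    3 * h ^ 2 = 2 * a ^ 2 := by
  have base := sub_eq_smul_sub_of_eq_smul_add h₂ h₁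
  have vertical := sub_eq_smul_sub_of_eq_smul_add h₄ h₁
  rw [rightPrism_field₂_sub_field₁, v3_sub, smul_v3, v3_inj] at base
  rw [rightPrism_field₄_sub_field₁, v3_sub, smul_v3, v3_inj] at vertical
  obtain ⟨hbase, -, -⟩ := base
  obtain ⟨-, -, hvert⟩ := vertical
  apply mul_left_cancel₀ (mul_ne_zero ha hb)
  linear_combination a * h * hbase - a ^ 2 * hvert


theorem optimal_symmetric_prism_height_general (a h : ℝ) (ha : 0 < a) (hh : 0 < h)
    (q₁ q₂ q₃ q₄ q₅ q₆ : E3)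
    (hq₁ : q₁ = v3 0 0 0) (hq₂ : q₂ = v3 a 0 0)
    (hq₃ : q₃ = v3 (a / 2) (a * Real.sqrt 3 / 2) 0)
    (hq₄ : q₄ = v3 0 0 h) (hq₅ : q₅ = v3 a 0 h)
    (hq₆ : q₆ = v3 (a / 2) (a * Real.sqrt 3 / 2) h)
    (lam : ℝ) (c : E3)
    (h₁ : (1 / 2 : ℝ) • (nu3 q₃ q₂ q₄ + nu5 q₂ q₅ q₄ q₆ q₃) = lam • q₁ + c)
    (h₂ : (1 / 2 : ℝ) • (nu3 q₁ q₃ q₅ + nu5 q₃ q₆ q₅ q₄ q₁) = lam • q₂ + c)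
    (h₄ : (1 / 2 : ℝ) • (nu3 q₅ q₆ q₁ + nu5 q₆ q₃ q₁ q₂ q₅) = lam • q₄ + c) :
    h / a = Real.sqrt (2 / 3) := by
  subst hq₁ hq₂ hq₃ hq₄ hq₅ hq₆
  have hb : a * Real.sqrt 3 / 2 ≠ 0 := by positivity
  have hsq := rightPrism_height_sq_of_optimal ha.ne' hb h₁ h₂ h₄
  have hratio : (h / a) ^ 2 = 2 / 3 := by
    rw [div_pow]
    field_simp
    linarith
  rw [← hratio, Real.sqrt_sq (div_pos hh ha).le]

theorem optimal_symmetric_prism_height (a h : ℝ) (ha : 0 < a) (hh : 0 < h)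
    (q₁ q₂ q₃ q₄ q₅ q₆ : E3)
    (hq₁ : q₁ = v3 0 0 0) (hq₂ : q₂ = v3 a 0 0)
    (hq₃ : q₃ = v3 (a / 2) (a * Real.sqrt 3 / 2) 0)
    (hq₄ : q₄ = v3 0 0 h) (hq₅ : q₅ = v3 a 0 h)
    (hq₆ : q₆ = v3 (a / 2) (a * Real.sqrt 3 / 2) h)
    (lam : ℝ) (hlam : lam ≠ 0) (c : E3)
    (h₁ : (1 / 2 : ℝ) • (nu3 q₃ q₂ q₄ + nu5 q₂ q₅ q₄ q₆ q₃) = lam • q₁ + c)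
    (h₂ : (1 / 2 : ℝ) • (nu3 q₁ q₃ q₅ + nu5 q₃ q₆ q₅ q₄ q₁) = lam • q₂ + c)
    (h₃ : (1 / 2 : ℝ) • (nu3 q₂ q₁ q₆ + nu5 q₁ q₄ q₆ q₅ q₂) = lam • q₃ + c)
    (h₄ : (1 / 2 : ℝ) • (nu3 q₅ q₆ q₁ + nu5 q₆ q₃ q₁ q₂ q₅) = lam • q₄ + c)
    (h₅ : (1 / 2 : ℝ) • (nu3 q₆ q₄ q₂ + nu5 q₄ q₁ q₂ q₃ q₆) = lam • q₅ + c)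
    (h₆ : (1 / 2 : ℝ) • (nu3 q₄ q₅ q₃ + nu5 q₅ q₂ q₃ q₁ q₄) = lam • q₆ + c) :
    h / a = Real.sqrt (2 / 3) :=
  optimal_symmetric_prism_height_general a h ha hh q₁ q₂ q₃ q₄ q₅ q₆ hq₁ hq₂ hq₃ hq₄ hq₅ hq₆ lam c
    h₁ h₂ h₄
end
end

section
/- Let q₁, q₂, q₃, q₄ ∈ ℝ³ and suppose there exists a common vector c ∈ ℝ³ with ν(q₄,q₃,q₂) = ν(q₄,q₁,q₃) = ν(q₄,q₂,q₁) = ν(q₁,q₂,q₃) = c. Then c = 0 and the four points q₁, q₂, q₃, q₄ are collinear. Conversely, if q₁, q₂, q₃, q₄ are collinear, then ν(q₄,q₃,q₂) = ν(q₄,q₁,q₃) = ν(q₄,q₂,q₁) = ν(q₁,q₂,q₃) = 0. (Hence the singular tetrahedra with vanishing volume are exactly the collinear ones.) -/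
open scoped RealInnerProductSpace

noncomputable section

/-! The four faces `ν(q₄,q₃,q₂), ν(q₄,q₁,q₃), ν(q₄,q₂,q₁), ν(q₁,q₂,q₃)` are the oriented faces
of the tetrahedron and sum to zero, so if all equal `c` then `4c = 0`. Since
`ν(a,b,c) = (b - a) × (c - a)`, a face vanishes exactly when `b - a` and `c - a` are linearly
dependent, i.e. when `a, b, c` are collinear. If `q₁ ≠ q₂`, the two faces through the edge `q₁q₂`
put `q₃` and `q₄` on the line `q₁q₂`; if `q₁ = q₂`, the face `ν(q₄,q₁,q₃)` alone does. -/

section Collinear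

variable {k V P : Type*} [Field k] [AddCommGroup V] [Module k V] [AddTorsor V P]

theorem collinear_iff_not_linearIndependent_vsub {p₁ p₂ p₃ : P} :
    Collinear k ({p₁, p₂, p₃} : Set P) ↔ ¬LinearIndependent k ![p₂ -ᵥ p₁, p₃ -ᵥ p₁] := by
  rw [collinear_iff_not_affineIndependent_set, affineIndependent_iff_linearIndependent_vsub k _ 0,
    ← linearIndependent_equiv' (finSuccAboveEquiv (0 : Fin 3)) (g := ![p₂ -ᵥ p₁, p₃ -ᵥ p₁])]
  ext i
  fin_cases i <;> rfl

theorem collinear_of_collinear_triples {p₁ p₂ p₃ p₄ : P}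
    (h₁₂₃ : Collinear k ({p₁, p₂, p₃} : Set P)) (h₁₂₄ : Collinear k ({p₁, p₂, p₄} : Set P))
    (h₁₃₄ : Collinear k ({p₁, p₃, p₄} : Set P)) :
    Collinear k ({p₁, p₂, p₃, p₄} : Set P) := by
  by_cases h₁₂ : p₁ = p₂
  · subst h₁₂
    simpa using h₁₃₄
  · have hp₃ : p₃ ∈ line[k, p₁, p₂] :=
      h₁₂₃.mem_affineSpan_of_mem_of_ne (by simp) (by simp) (by simp) h₁₂
    have hp₄ : p₄ ∈ line[k, p₁, p₂] :=
      h₁₂₄.mem_affineSpan_of_mem_of_ne (by simp) (by simp) (by simp) h₁₂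
    exact (collinear_insert_insert_of_mem_affineSpan_pair hp₃ hp₄).subset
      (by simp [Set.insert_subset_iff])

end Collinear

lemma cross_eq_toLp_crossProduct (a b : E3) :
    cross a b = WithLp.toLp 2 (crossProduct (WithLp.ofLp a) (WithLp.ofLp b)) := by
  ext i
  fin_cases i <;> simp [cross, cross_apply]

lemma linearIndependent_pair_ofLp {a b : E3} :
    LinearIndependent ℝ ![a.ofLp, b.ofLp] ↔ LinearIndependent ℝ ![a, b] := by
  rw [← (WithLp.linearEquiv 2 ℝ (Fin 3 → ℝ)).toLinearMap.linearIndependent_iff (LinearEquiv.ker _)]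
  congr! 1
  ext i
  fin_cases i <;> rfl

lemma cross_eq_zero_iff {a b : E3} : cross a b = 0 ↔ ¬LinearIndependent ℝ ![a, b] := by
  rw [← linearIndependent_pair_ofLp, ← crossProduct_ne_zero_iff_linearIndependent, not_not,
    cross_eq_toLp_crossProduct, WithLp.toLp_eq_zero]

lemma nu3_eq_cross_sub (a b c : E3) : nu3 a b c = cross (b - a) (c - a) := by
  ext i
  fin_cases i <;> simp [nu3, cross] <;> ring

lemma nu3_eq_zero_iff_collinear {a b c : E3} :
    nu3 a b c = 0 ↔ Collinear ℝ ({a, b, c} : Set E3) := by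
  rw [nu3_eq_cross_sub, cross_eq_zero_iff, collinear_iff_not_linearIndependent_vsub]
  rfl

lemma nu3_faces_sum_eq_zero (q₁ q₂ q₃ q₄ : E3) :
    nu3 q₄ q₃ q₂ + nu3 q₄ q₁ q₃ + nu3 q₄ q₂ q₁ + nu3 q₁ q₂ q₃ = 0 := by
  ext i
  fin_cases i <;> simp [nu3, cross] <;> ring

theorem level_zero_singular_tetrahedra_are_collinear (q₁ q₂ q₃ q₄ : E3) :
    (∀ c : E3,
      nu3 q₄ q₃ q₂ = c → nu3 q₄ q₁ q₃ = c → nu3 q₄ q₂ q₁ = c → nu3 q₁ q₂ q₃ = c →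
        c = 0 ∧ Collinear ℝ ({q₁, q₂, q₃, q₄} : Set E3)) ∧
    (Collinear ℝ ({q₁, q₂, q₃, q₄} : Set E3) →
      nu3 q₄ q₃ q₂ = 0 ∧ nu3 q₄ q₁ q₃ = 0 ∧ nu3 q₄ q₂ q₁ = 0 ∧ nu3 q₁ q₂ q₃ = 0) := by
  refine ⟨fun c h₄₃₂ h₄₁₃ h₄₂₁ h₁₂₃ => ?_, fun h => ?_⟩
  · have hc : c = 0 := by
      have h4c : (4 : ℝ) • c = 0 := by
        rw [← nu3_faces_sum_eq_zero q₁ q₂ q₃ q₄, h₄₃₂, h₄₁₃, h₄₂₁, h₁₂₃]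
        module
      simpa using h4c
    subst hc
    rw [nu3_eq_zero_iff_collinear] at h₄₁₃ h₄₂₁ h₁₂₃
    exact ⟨rfl, collinear_of_collinear_triples h₁₂₃
      (h₄₂₁.subset (by simp [Set.insert_subset_iff]))
      (h₄₁₃.subset (by simp [Set.insert_subset_iff]))⟩
  · simp only [nu3_eq_zero_iff_collinear]
    refine ⟨?_, ?_, ?_, ?_⟩ <;> exact h.subset (by simp [Set.insert_subset_iff])
end
end
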